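/- Fix an integer r ≥ 0 and real numbers A > 0 and β > 0. Let (f_n)_{n≥1} be a sequence of monic polynomials in ℝ[X] such that every root of every f_n is real and lies in the interval [−A, A], and write d_n = deg f_n. Assume d_n → ∞ as n → ∞ and that p_1(f_n) ≥ β·d_n for all n. Then there exists N such that for all n ≥ N, the coefficient c_r(f_n) is nonzero with sign (−1)^r, i.e. (−1)^r · c_r(f_n) > 0; that is, the coefficients eventually follow the alternating sign pattern +, −, +, −, …. -/

import Mathlib

open Polynomial Filter Asymptotics

open Finset in

lemma newton_multiset (s : Multiset ℝ) (k : ℕ) :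
    (k : ℝ) * s.esymm k = (-1) ^ (k + 1) *
      ∑ a ∈ Finset.HasAntidiagonal.antidiagonal k with a.1 < k,
        (-1) ^ a.1 * s.esymm a.1 * (s.map (fun x => x ^ a.2)).sum := by
  have hs : (↑s.toList : Multiset ℝ) = s := s.coe_toList
  set l := s.toList with hl
  have key := congrArg (MvPolynomial.aeval l.get)
    (MvPolynomial.mul_esymm_eq_sum (Fin l.length) ℝ k)
  have huniv : (Finset.univ.val.map l.get) = s := by
    rw [Fin.univ_val_map, List.ofFn_get, hs]
  have haev : ∀ j, MvPolynomial.aeval l.get (MvPolynomial.esymm (Fin l.length) ℝ j)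
      = s.esymm j := by
    intro j
    rw [MvPolynomial.aeval_esymm_eq_multiset_esymm, huniv]
  have hps : ∀ j, MvPolynomial.aeval l.get (MvPolynomial.psum (Fin l.length) ℝ j)
      = (s.map (fun x => x ^ j)).sum := by
    intro j
    simp only [MvPolynomial.psum, map_sum, map_pow, MvPolynomial.aeval_X]
    rw [← huniv, Multiset.map_map]
    rfl
  simp only [map_mul, map_pow, map_neg, map_one, map_sum, map_natCast, haev, hps] at key
  exact key


lemma abs_prod_le (A : ℝ) (t : Multiset ℝ) (h : ∀ x ∈ t, |x| ≤ A) :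
    |t.prod| ≤ A ^ (Multiset.card t) := by
  induction t using Multiset.induction with
  | empty => simp
  | cons a t ih =>
    have hA : 0 ≤ A := le_trans (abs_nonneg a) (h a (Multiset.mem_cons_self a t))
    rw [Multiset.prod_cons, Multiset.card_cons, abs_mul, pow_succ']
    exact mul_le_mul (h a (Multiset.mem_cons_self a t)) (ih fun x hx => h x (Multiset.mem_cons_of_mem hx))
      (abs_nonneg _) hA

lemma esymm_abs_le (A : ℝ) (hA : 0 ≤ A) (s : Multiset ℝ) (h : ∀ x ∈ s, |x| ≤ A) (k : ℕ) :
    |s.esymm k| ≤ (Multiset.card s : ℝ) ^ k * A ^ k := by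
  have h1 : |s.esymm k| ≤ (((s.powersetCard k).map Multiset.prod).map abs).sum :=
    Multiset.abs_sum_le_sum_abs
  rw [Multiset.map_map] at h1
  have h2 : (((s.powersetCard k)).map (abs ∘ Multiset.prod)).sum
      ≤ ((s.powersetCard k).map (fun _ => A ^ k)).sum := by
    apply Multiset.sum_map_le_sum_map
    intro t ht
    obtain ⟨hts, htc⟩ := (Multiset.mem_powersetCard).1 ht
    simpa [htc] using abs_prod_le A t (fun x hx => h x (Multiset.mem_of_le hts hx))
  have h3 : ((s.powersetCard k).map (fun _ => A ^ k)).sum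
      = ((Multiset.card s).choose k : ℝ) * A ^ k := by
    rw [Multiset.map_const', Multiset.sum_replicate, Multiset.card_powersetCard]
    simp [nsmul_eq_mul]
  have h4 : ((Multiset.card s).choose k : ℝ) ≤ (Multiset.card s : ℝ) ^ k := by
    exact_mod_cast Nat.cast_le.2 (Nat.choose_le_pow _ _)
  have hAk : 0 ≤ A ^ k := pow_nonneg hA k
  calc |s.esymm k| ≤ _ := h1
    _ ≤ _ := h2
    _ = _ := h3
    _ ≤ (Multiset.card s : ℝ) ^ k * A ^ k := by nlinarith [h4]

lemma psum_abs_le (A : ℝ) (hA : 0 ≤ A) (s : Multiset ℝ) (h : ∀ x ∈ s, |x| ≤ A) (j : ℕ) :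
    |(s.map (fun x => x ^ j)).sum| ≤ (Multiset.card s : ℝ) * A ^ j := by
  have h1 : |(s.map (fun x => x ^ j)).sum| ≤ ((s.map (fun x => x ^ j)).map abs).sum :=
    Multiset.abs_sum_le_sum_abs
  rw [Multiset.map_map] at h1
  have h2 : (s.map (abs ∘ fun x => x ^ j)).sum ≤ (s.map (fun _ => A ^ j)).sum := by
    apply Multiset.sum_map_le_sum_map
    intro x hx
    simpa [abs_pow] using pow_le_pow_left₀ (abs_nonneg x) (h x hx) j
  rw [Multiset.map_const', Multiset.sum_replicate, nsmul_eq_mul] at h2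
  linarith

lemma key_bound (A β : ℝ) (hA : 0 < A) (hβ : 0 < β) :
    ∀ k : ℕ, ∃ C : ℝ, 0 ≤ C ∧ ∀ s : Multiset ℝ, (∀ x ∈ s, |x| ≤ A) →
      β * (Multiset.card s : ℝ) ≤ (s.map (fun x => x ^ 1)).sum →
      (β ^ k / (k.factorial : ℝ)) * (Multiset.card s : ℝ) ^ (k + 1)
        - C * (Multiset.card s : ℝ) ^ k ≤ (Multiset.card s : ℝ) * s.esymm k := by
  intro k
  induction k with
  | zero =>
    refine ⟨0, le_refl 0, fun s hs hp => ?_⟩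
    simp [Multiset.esymm]
  | succ k ih =>
    obtain ⟨C, hC0, hC⟩ := ih
    refine ⟨(C * A + (k + 2) * A ^ (k + 1)) / (k + 1), by positivity, fun s hs hp => ?_⟩
    set d : ℝ := (Multiset.card s : ℝ) with hd
    have hd0 : 0 ≤ d := Nat.cast_nonneg _
    rcases eq_or_lt_of_le hd0 with hdz | hdpos
    · rw [← hdz]
      simp [zero_pow (Nat.succ_ne_zero (k+1)), zero_pow (Nat.succ_ne_zero k)]
    have hcard : 0 < Multiset.card s := by
      rcases Nat.eq_zero_or_pos (Multiset.card s) with h | h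
      · rw [hd, h] at hdpos; norm_num at hdpos
      · exact h
    have hd1 : (1:ℝ) ≤ d := by rw [hd]; exact_mod_cast hcard
    -- Newton's identity at k+1
    have hN := newton_multiset s (k + 1)
    set p1 : ℝ := (s.map (fun x => x ^ 1)).sum with hp1
    set T : Finset (ℕ × ℕ) := {a ∈ Finset.HasAntidiagonal.antidiagonal (k+1) | a.1 < k + 1} with hT
    have hmem : (k, 1) ∈ T := by
      simp [hT, Finset.mem_filter, Finset.mem_antidiagonal]
    have hsplit := (Finset.add_sum_erase T
      (fun a => (-1:ℝ) ^ a.1 * s.esymm a.1 * (s.map (fun x => x ^ a.2)).sum) hmem).symm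
    -- bound the remainder sum
    set R : ℝ := ∑ a ∈ T.erase (k, 1),
      (-1:ℝ) ^ a.1 * s.esymm a.1 * (s.map (fun x => x ^ a.2)).sum with hR
    have hRbound : |R| ≤ (k + 2) * (A ^ (k+1) * d ^ k) := by
      have h1 : |R| ≤ ∑ a ∈ T.erase (k, 1),
          |(-1:ℝ) ^ a.1 * s.esymm a.1 * (s.map (fun x => x ^ a.2)).sum| :=
        Finset.abs_sum_le_sum_abs _ _
      have h2 : ∀ a ∈ T.erase (k, 1),
          |(-1:ℝ) ^ a.1 * s.esymm a.1 * (s.map (fun x => x ^ a.2)).sum|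
            ≤ A ^ (k+1) * d ^ k := by
        intro a ha
        obtain ⟨hane, haT⟩ := Finset.mem_erase.1 ha
        obtain ⟨hasum, halt⟩ := Finset.mem_filter.1 haT
        rw [Finset.HasAntidiagonal.mem_antidiagonal] at hasum
        have ha1 : a.1 + 1 ≤ k := by
          rcases Nat.lt_or_ge a.1 k with h | h
          · omega
          · exfalso
            have : a.1 = k := by omega
            have : a.2 = 1 := by omega
            exact hane (Prod.ext (by omega) this)
        have e1 : |(-1:ℝ) ^ a.1 * s.esymm a.1 * (s.map (fun x => x ^ a.2)).sum|
            = |s.esymm a.1| * |(s.map (fun x => x ^ a.2)).sum| := by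
          rw [abs_mul, abs_mul, abs_pow, abs_neg, abs_one, one_pow, one_mul]
        rw [e1]
        have b1 := esymm_abs_le A hA.le s hs a.1
        have b2 := psum_abs_le A hA.le s hs a.2
        calc |s.esymm a.1| * |(s.map (fun x => x ^ a.2)).sum|
            ≤ (d ^ a.1 * A ^ a.1) * (d * A ^ a.2) := by
              apply mul_le_mul b1 b2 (abs_nonneg _) (by positivity)
          _ = A ^ (k+1) * d ^ (a.1 + 1) := by
              rw [← hasum, pow_add, pow_succ]; ring
          _ ≤ A ^ (k+1) * d ^ k := by
              apply mul_le_mul_of_nonneg_left (pow_le_pow_right₀ hd1 ha1) (by positivity)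
      have h3 : ∑ a ∈ T.erase (k, 1),
          |(-1:ℝ) ^ a.1 * s.esymm a.1 * (s.map (fun x => x ^ a.2)).sum|
            ≤ (T.erase (k,1)).card * (A ^ (k+1) * d ^ k) := by
        simpa using Finset.sum_le_card_nsmul _ _ _ h2
      have h4 : ((T.erase (k,1)).card : ℝ) ≤ (k + 2 : ℝ) := by
        have : (T.erase (k,1)).card ≤ k + 2 := by
          calc (T.erase (k,1)).card ≤ T.card := Finset.card_erase_le
            _ ≤ (Finset.HasAntidiagonal.antidiagonal (k+1)).card := Finset.card_filter_le _ _
            _ = k + 2 := by simp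
        exact_mod_cast this
      have h5 : (0:ℝ) ≤ A ^ (k+1) * d ^ k := by positivity
      calc |R| ≤ _ := h1
        _ ≤ (T.erase (k,1)).card * (A ^ (k+1) * d ^ k) := h3
        _ ≤ (k + 2) * (A ^ (k+1) * d ^ k) := by
            apply mul_le_mul_of_nonneg_right h4 h5
    -- rewrite Newton
    have hsign : (-1:ℝ) ^ (k + 1 + 1) * (-1:ℝ) ^ k = 1 := by
      rw [← pow_add]
      exact Even.neg_one_pow ⟨k + 1, by ring⟩
    have hNewton : ((k:ℝ) + 1) * s.esymm (k+1) = s.esymm k * p1 + (-1:ℝ)^(k+1+1) * R := by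
      have := hN
      rw [hsplit] at this
      simp only [show ((k,1) : ℕ × ℕ).1 = k from rfl, show ((k,1) : ℕ × ℕ).2 = 1 from rfl] at this
      push_cast at this
      calc ((k:ℝ) + 1) * s.esymm (k+1) = _ := this
        _ = ((-1:ℝ) ^ (k+1+1) * (-1:ℝ)^k) * (s.esymm k * p1) + (-1:ℝ)^(k+1+1) * R := by ring
        _ = s.esymm k * p1 + (-1:ℝ)^(k+1+1) * R := by rw [hsign, one_mul]
    -- main estimate
    have hek := hC s hs hp
    have hp1u : p1 ≤ A * d := by
      have := psum_abs_le A hA.le s hs 1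
      rw [← hp1] at this
      have := (abs_le.1 this).2
      rw [pow_one] at this; linarith
    have hp1l : β * d ≤ p1 := hp
    have hβd : 0 ≤ β * d := by positivity
    set P : ℝ := (β ^ k / (k.factorial : ℝ)) * d ^ (k+1) with hP
    have hP0 : 0 ≤ P := by positivity
    have hX : P - C * d ^ k ≤ d * s.esymm k := hek
    have hprod : P * (β * d) - C * d ^ k * (A * d) ≤ (d * s.esymm k) * p1 := by
      have h1 : 0 ≤ (d * s.esymm k - (P - C * d ^ k)) * p1 :=
        mul_nonneg (by linarith) (by linarith)
      have h2 : 0 ≤ P * (p1 - β * d) := mul_nonneg hP0 (by linarith)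
      have h3 : 0 ≤ (C * d ^ k) * (A * d - p1) :=
        mul_nonneg (by positivity) (by linarith)
      nlinarith [h1, h2, h3]
    have hRlow : -((k+2) * (A ^ (k+1) * d ^ k)) ≤ (-1:ℝ)^(k+1+1) * R := by
      have h1 : |(-1:ℝ)^(k+1+1) * R| = |R| := by
        rw [abs_mul, abs_pow, abs_neg, abs_one, one_pow, one_mul]
      have := (abs_le.1 (h1 ▸ hRbound)).1
      linarith
    -- combine, multiplied by d
    have hmain : ((k:ℝ) + 1) * (d * s.esymm (k+1))
        ≥ P * (β * d) - C * d ^ k * (A * d) - (k+2) * (A ^ (k+1) * d ^ k) * d := by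
      have step1 : ((k:ℝ) + 1) * s.esymm (k+1)
          ≥ s.esymm k * p1 - (k+2) * (A ^ (k+1) * d ^ k) := by
        rw [hNewton]; linarith
      have step2 : ((k:ℝ) + 1) * (d * s.esymm (k+1))
          ≥ (s.esymm k * p1 - (k+2) * (A ^ (k+1) * d ^ k)) * d := by
        have := mul_le_mul_of_nonneg_right step1.le hd0  -- careful direction
        calc ((k:ℝ) + 1) * (d * s.esymm (k+1)) = (((k:ℝ) + 1) * s.esymm (k+1)) * d := by ring
          _ ≥ (s.esymm k * p1 - (k+2) * (A ^ (k+1) * d ^ k)) * d :=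
              mul_le_mul_of_nonneg_right step1 hd0
      have step3 : (s.esymm k * p1 - (k+2) * (A ^ (k+1) * d ^ k)) * d
          = (d * s.esymm k) * p1 - (k+2) * (A ^ (k+1) * d ^ k) * d := by ring
      rw [step3] at step2
      linarith
    -- final algebra
    have hfac : ((k+1).factorial : ℝ) = ((k:ℝ) + 1) * (k.factorial : ℝ) := by
      rw [Nat.factorial_succ]; push_cast; ring
    have hfk : (k.factorial : ℝ) ≠ 0 := by positivity
    have hk1 : (0:ℝ) < (k:ℝ) + 1 := by positivity
    rw [ge_iff_le] at hmain
    rw [← mul_le_mul_iff_of_pos_left hk1]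
    calc ((k:ℝ)+1) * ((β ^ (k+1) / ((k+1).factorial : ℝ)) * d ^ (k+1+1)
          - (C * A + (k + 2) * A ^ (k + 1)) / (k + 1) * d ^ (k+1))
        = P * (β * d) - C * d ^ k * (A * d) - (k+2) * (A ^ (k+1) * d ^ k) * d := by
          rw [hP, hfac]
          field_simp
          ring
      _ ≤ ((k:ℝ) + 1) * (d * s.esymm (k+1)) := hmain

/-- For a sequence of monic real polynomials `fₙ`, all of whose roots are real and lie
in `[-A, A]`, with `dₙ → ∞` and `p₁(fₙ) ≥ β dₙ`, the coefficient `c_r(fₙ)` eventually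
has sign `(-1)^r`: the coefficients eventually follow the pattern `+, -, +, -, …`. -/
theorem coeff_sign_positive_trace (r : ℕ) (A β : ℝ) (hA : 0 < A) (hβ : 0 < β)
    (f : ℕ → Polynomial ℝ)
    (hmonic : ∀ n, (f n).Monic)
    (hsplit : ∀ n, Multiset.card (f n).roots = (f n).natDegree)
    (hroots : ∀ n, ∀ x ∈ (f n).roots, x ∈ Set.Icc (-A) A)
    (hdeg : Tendsto (fun n => (f n).natDegree) atTop atTop)
    (hp1 : ∀ n, β * ((f n).natDegree : ℝ) ≤ ((f n).roots.map (fun x => x ^ 1)).sum) :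
    ∃ N : ℕ, ∀ n ≥ N, 0 < (-1 : ℝ) ^ r * (f n).coeff ((f n).natDegree - r) := by
  obtain ⟨C, hC0, hC⟩ := key_bound A β hA hβ r
  obtain ⟨M, hM⟩ := exists_nat_gt (C * (r.factorial : ℝ) / β ^ r)
  set M0 : ℕ := max M (r + 1) with hM0
  obtain ⟨N, hN⟩ := (hdeg.eventually_ge_atTop M0).exists_forall_of_atTop
  refine ⟨N, fun n hn => ?_⟩
  have hdge : M0 ≤ (f n).natDegree := hN n hn
  set d : ℕ := (f n).natDegree with hdd
  have hr1 : r + 1 ≤ d := le_trans (le_max_right _ _) hdge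
  have hr : r ≤ d := by omega
  have hd1 : (1:ℝ) ≤ (d:ℝ) := by exact_mod_cast Nat.one_le_iff_ne_zero.2 (by omega)
  have hdM : (C * (r.factorial : ℝ) / β ^ r) < (d:ℝ) := by
    refine lt_of_lt_of_le hM ?_
    exact_mod_cast le_trans (le_max_left M (r+1)) hdge
  set s : Multiset ℝ := (f n).roots with hss
  have hcard : Multiset.card s = d := hsplit n
  have habs : ∀ x ∈ s, |x| ≤ A := by
    intro x hx
    have := hroots n x hx
    rw [Set.mem_Icc] at this
    exact abs_le.2 this
  have hp : β * (Multiset.card s : ℝ) ≤ (s.map (fun x => x ^ 1)).sum := by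
    rw [hcard]; exact hp1 n
  have hkey := hC s habs hp
  rw [hcard] at hkey
  -- positivity of esymm r
  have hfpos : (0:ℝ) < (r.factorial : ℝ) := by exact_mod_cast r.factorial_pos
  have hCd : C < β ^ r / (r.factorial : ℝ) * (d:ℝ) := by
    rw [div_lt_iff₀ (pow_pos hβ r)] at hdM
    rw [← mul_lt_mul_iff_of_pos_right hfpos]
    calc C * (r.factorial : ℝ) < (d:ℝ) * β ^ r := hdM
      _ = β ^ r / (r.factorial : ℝ) * (d:ℝ) * (r.factorial : ℝ) := by field_simp
  have hdpow : (0:ℝ) < (d:ℝ) ^ r := by positivity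
  have hlower : (0:ℝ) < (d:ℝ) * s.esymm r := by
    have h1 : (β ^ r / (r.factorial : ℝ)) * (d:ℝ) ^ (r + 1) - C * (d:ℝ) ^ r
        = (d:ℝ) ^ r * (β ^ r / (r.factorial : ℝ) * (d:ℝ) - C) := by ring
    have h2 : (0:ℝ) < (d:ℝ) ^ r * (β ^ r / (r.factorial : ℝ) * (d:ℝ) - C) :=
      mul_pos hdpow (by linarith)
    linarith [hkey, h1 ▸ h2]
  have hesymm : (0:ℝ) < s.esymm r := by
    by_contra h
    push_neg at h
    nlinarith [hlower, hd1]
  -- express the coefficient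
  have hco := Polynomial.coeff_eq_esymm_roots_of_card (p := f n) (hsplit n)
    (k := d - r) (Nat.sub_le d r)
  rw [(hmonic n).leadingCoeff, Nat.sub_sub_self hr, one_mul] at hco
  rw [hco, ← mul_assoc, ← pow_add]
  have : ((-1:ℝ)) ^ (r + r) = 1 := Even.neg_one_pow ⟨r, by ring⟩
  rw [this, one_mul]
  exact hesymm
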